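/- arXiv:2509.00162 — 2 statements merged into one kernel-verified Lean document; each statement's English description precedes it below -/
import Mathlib

section
/- Let θ be the substitution on {a,b} with θ(a) = ab and θ(b) = aa, and let X_θ be its substitution subshift. Let γ be the substitution on {A,B,C,D,E} with γ(A) = ABAC, γ(B) = ABDE, γ(C) = AEDC, γ(D) = ABDC, γ(E) = AEDE, and let X_γ be its substitution subshift. Then (X_θ, σ³) is topologically conjugate to (X_γ, σ). -/
open Set Topology Classical

noncomputable section

/-- The left shift `σ` on bi-infinite sequences: `(σ x) n = x (n+1)`. -/
def shiftMap {A : Type} (x : ℤ → A) : ℤ → A := fun n => x (n + 1)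

/-- The shift by an integer amount: `shiftZ n x = σ^n x`. -/
def shiftZ {A : Type} (n : ℤ) (x : ℤ → A) : ℤ → A := fun m => x (m + n)

/-- A bi-infinite sequence is Toeplitz if every coordinate is periodically repeated. -/
def IsToeplitz {A : Type} (x : ℤ → A) : Prop :=
  ∀ i : ℤ, ∃ p : ℕ, 0 < p ∧ ∀ k : ℤ, x (i + k * (p : ℤ)) = x i

/-- The closure of the full shift orbit of `x`. -/
def orbitClosure {A : Type} [TopologicalSpace A] (x : ℤ → A) : Set (ℤ → A) :=
  closure {y | ∃ n : ℤ, shiftZ n x = y}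

/-- The finite word `x_i x_{i+1} ⋯ x_{i+n-1}`. -/
def seqWord {A : Type} (x : ℤ → A) (i : ℤ) (n : ℕ) : List A :=
  List.ofFn fun m : Fin n => x (i + (m : ℕ))

/-- Iterates `θ^k` of a substitution, applied to a letter. -/
def substPow {A : Type} (θ : A → List A) : ℕ → A → List A
  | 0, a => [a]
  | k + 1, a => (θ a).flatMap (substPow θ k)

/-- The substitution subshift of `θ`: all sequences whose finite subwords occur in
some `θ^k(a)`. -/
def substShift {A : Type} (θ : A → List A) : Set (ℤ → A) :=
  {x | ∀ i : ℤ, ∀ n : ℕ, ∃ (k : ℕ) (a : A), (seqWord x i n).IsInfix (substPow θ k a)}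

/-- The full orbit of `x` under an (invertible) map `S`, within the set `X`. -/
def orbitIn {α : Type} (S : α → α) (X : Set α) (x : α) : Set α :=
  {y | y ∈ X ∧ ∃ n : ℕ, S^[n] x = y ∨ S^[n] y = x}

/-- Every `S`-orbit within `X` is dense in `X`. -/
def MinimalOn {α : Type} [TopologicalSpace α] (S : α → α) (X : Set α) : Prop :=
  ∀ x ∈ X, X ⊆ closure (orbitIn S X x)

/-- Every `T`-orbit in `X` is the union of exactly `c` distinct `S`-orbits. -/
def OrbitNumberOn {α : Type} (T S : α → α) (X : Set α) (c : ℕ) : Prop :=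
  ∀ x ∈ X, ∃ r : Fin c → α,
    (∀ i, r i ∈ orbitIn T X x) ∧
    (∀ i j, i ≠ j → r j ∉ orbitIn S X (r i)) ∧
    (∀ y ∈ orbitIn T X x, ∃ i, y ∈ orbitIn S X (r i))

/-- `S` restricts to a homeomorphism of the subset `X`. -/
def RestrictsToHomeomorph {α : Type} [TopologicalSpace α] (S : α → α) (X : Set α) : Prop :=
  ∃ e : X ≃ₜ X, ∀ x : X, (e x : α) = S (x : α)

/-- The systems `(X, S)` and `(Y, R)` are topologically conjugate. -/
def TopConj {α β : Type} [TopologicalSpace α] [TopologicalSpace β]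
    (X : Set α) (S : α → α) (Y : Set β) (R : β → β) : Prop :=
  ∃ (hS : Set.MapsTo S X X) (hR : Set.MapsTo R Y Y) (h : X ≃ₜ Y),
    ∀ x : X, h (Set.MapsTo.restrict S X X hS x) = Set.MapsTo.restrict R Y Y hR (h x)

/-- `(Y, R)` is a topological factor of `(X, S)`. -/
def IsFactorOn {α β : Type} [TopologicalSpace α] [TopologicalSpace β]
    (X : Set α) (S : α → α) (Y : Set β) (R : β → β) : Prop :=
  ∃ F : α → β, Set.MapsTo F X Y ∧ ContinuousOn F X ∧ Set.SurjOn F X Y ∧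
    ∀ x ∈ X, F (S x) = R (F x)

/-- `(X, S)` is a Toeplitz flow: it is topologically conjugate to the orbit closure of
some Toeplitz sequence over some finite alphabet, with the shift map. -/
def IsToeplitzFlow {α : Type} [TopologicalSpace α] (X : Set α) (S : α → α) : Prop :=
  ∃ (B : Type) (_ : Fintype B) (z : ℤ → B), IsToeplitz z ∧
    (letI : TopologicalSpace B := ⊥
     TopConj X S (orbitClosure z) shiftMap)

/-- `Per_p(x)`: the set of positions where `x` is periodic with period `p`. -/
def PerSet {A : Type} (x : ℤ → A) (p : ℕ) : Set ℤ :=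
  {k | ∀ n : ℤ, x (k + n * (p : ℤ)) = x k}

/-- `p` is an essential period of `x`. -/
def IsEssentialPeriod {A : Type} (x : ℤ → A) (p : ℕ) : Prop :=
  0 < p ∧ ¬ ∃ q : ℕ, 0 < q ∧ q < p ∧
    ((fun k => k + (q : ℤ)) '' PerSet x p = PerSet x p) ∧
    (∀ k ∈ PerSet x p, x (k + (q : ℤ)) = x k)

/-- A period structure for a Toeplitz sequence `x`. -/
def IsPeriodStructure {A : Type} (x : ℤ → A) (p : ℕ → ℕ) : Prop :=
  StrictMono p ∧ (∀ k, IsEssentialPeriod x (p k)) ∧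
  (∀ k, p k ∣ p (k + 1)) ∧ (⋃ k, PerSet x (p k)) = Set.univ

/-- `x` is a (σ-)periodic sequence. -/
def IsPeriodicSeq {A : Type} (x : ℤ → A) : Prop :=
  ∃ n : ℕ, 0 < n ∧ ∀ m : ℤ, x (m + (n : ℤ)) = x m

/-- `z` is the bi-infinite concatenation of the `ψ`-images of the letters of `y`,
with `ψ(y₀)` beginning at coordinate `0`. -/
def IsConcat {B C : Type} (ψ : B → List C) (y : ℤ → B) (z : ℤ → C) : Prop :=
  ∃ s : ℤ → ℤ, s 0 = 0 ∧
    (∀ n : ℤ, s (n + 1) = s n + ((ψ (y n)).length : ℤ)) ∧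
    (∀ n : ℤ, ∀ j : Fin (ψ (y n)).length, z (s n + (j : ℕ)) = (ψ (y n)).get j)

/-- `p(x,n) = Σ_{i<n} p(Sⁱ x)`. -/
def psum {X : Type} (p : X → ℕ) (S : X → X) (x : X) (n : ℕ) : ℕ :=
  ∑ i ∈ Finset.range n, p (S^[i] x)


/-- The substitution θ(a) = ab, θ(b) = aa on the alphabet {a, b} = Fin 2 (a = 0, b = 1). -/
def theta : Fin 2 → List (Fin 2) := fun i => if i = 0 then [0, 1] else [0, 0]

/-- The substitution γ on {A,B,C,D,E} = Fin 5 (A = 0, …, E = 4). -/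
def gam : Fin 5 → List (Fin 5) := fun i =>
  if i = 0 then [0, 1, 0, 2]
  else if i = 1 then [0, 1, 3, 4]
  else if i = 2 then [0, 4, 3, 2]
  else if i = 3 then [0, 1, 3, 2]
  else [0, 4, 3, 4]

/-! Reading a θ-sequence in blocks of length three gives a γ-sequence. The θ-legal words avoid
`11`, so only five 3-blocks occur; `decode` lists them as the images of A, …, E, and it
intertwines the substitutions: `decode ∘ γ = θ² ∘ decode`. Hence decoding a γ-legal word gives a
θ-legal word. Conversely, every θ-legal word occurs in some `θ^{2M}(a)`, hence three times in
`θ^{2M}(aaa) = decode (γ^M(D))`, and since `|θ^{2M}(a)| = 4^M ≡ 1 (mod 3)` one of these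
occurrences starts at a multiple of three. As `decode` is injective of constant length, an
aligned occurrence in `decode (γ^M(D))` is the decoding of a subword of `γ^M(D)`. -/

open Function

section Words

variable {A : Type}

lemma seqWord_add (x : ℤ → A) (i : ℤ) (m n : ℕ) :
    seqWord x i (m + n) = seqWord x i m ++ seqWord x (i + m) n := by
  simp only [seqWord, List.ofFn_add]
  congr 2
  funext j
  simp only [Fin.val_natAdd]
  push_cast
  ring_nf

lemma seqWord_infix (x : ℤ → A) {i j : ℤ} {m n : ℕ} (hji : j ≤ i) (hend : i + n ≤ j + m) :
    seqWord x i n <:+: seqWord x j m := by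
  obtain ⟨a, rfl⟩ : ∃ a : ℕ, i = j + a := ⟨(i - j).toNat, by omega⟩
  obtain ⟨b, rfl⟩ : ∃ b : ℕ, m = a + n + b := ⟨m - a - n, by omega⟩
  rw [seqWord_add, seqWord_add]
  exact List.infix_append _ _ _

lemma seqWord_shiftMap (x : ℤ → A) (i : ℤ) (n : ℕ) :
    seqWord (shiftMap x) i n = seqWord x (i + 1) n := by
  simp only [seqWord, shiftMap]
  congr 1
  funext m
  ring_nf

lemma shiftMap_iterate_apply (k : ℕ) (x : ℤ → A) (m : ℤ) : shiftMap^[k] x m = x (m + k) := by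
  induction k generalizing x with
  | zero => simp
  | succ k ih =>
    rw [iterate_succ_apply, ih]
    simp only [shiftMap]
    push_cast
    ring_nf

lemma mapsTo_shiftMap_substShift (θ : A → List A) :
    MapsTo shiftMap (substShift θ) (substShift θ) := fun x hx i n => by
  simpa only [seqWord_shiftMap] using hx (i + 1) n

end Words

section Substitutions

variable {A B : Type}

lemma substPow_add (θ : A → List A) (j k : ℕ) (a : A) :
    substPow θ (j + k) a = (substPow θ k a).flatMap (substPow θ j) := by
  induction k generalizing a with
  | zero => simp [substPow]
  | succ k ih =>
    show (θ a).flatMap (substPow θ (j + k)) = ((θ a).flatMap (substPow θ k)).flatMap (substPow θ j)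
    rw [List.flatMap_assoc]
    simp only [← ih]

lemma substPow_succ_eq_flatMap (θ : A → List A) (k : ℕ) (a : A) :
    substPow θ (k + 1) a = (substPow θ k a).flatMap θ := by
  rw [add_comm, substPow_add]
  simp [substPow]

lemma length_flatMap_of_length_eq {f : A → List B} {ℓ : ℕ} (hf : ∀ a, (f a).length = ℓ)
    (l : List A) : (l.flatMap f).length = ℓ * l.length := by
  simp [List.length_flatMap, hf, mul_comm]

lemma length_substPow {θ : A → List A} {ℓ : ℕ} (hθ : ∀ a, (θ a).length = ℓ) (k : ℕ) (a : A) :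
    (substPow θ k a).length = ℓ ^ k := by
  induction k generalizing a with
  | zero => rfl
  | succ k ih =>
    rw [substPow_succ_eq_flatMap, length_flatMap_of_length_eq hθ, ih, pow_succ, mul_comm]

lemma substPow_prefix_succ {θ : A → List A} {a : A} {w : List A} (ha : θ a = a :: w) (k : ℕ) :
    substPow θ k a <+: substPow θ (k + 1) a := by
  show _ <+: (θ a).flatMap (substPow θ k)
  rw [ha, List.flatMap_cons]
  exact List.prefix_append _ _

lemma substPow_prefix_of_le {θ : A → List A} {a : A} {w : List A} (ha : θ a = a :: w)
    {k m : ℕ} (hkm : k ≤ m) : substPow θ k a <+: substPow θ m a := by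
  induction hkm with
  | refl => exact List.prefix_refl _
  | step _ ih => exact ih.trans (substPow_prefix_succ ha _)

lemma flatMap_substPow_of_semiconj {γ : B → List B} {θ : A → List A} {d : B → List A} {j : ℕ}
    (h : ∀ b, (γ b).flatMap d = (d b).flatMap (substPow θ j)) (M : ℕ) (b : B) :
    (substPow γ M b).flatMap d = (d b).flatMap (substPow θ (j * M)) := by
  induction M generalizing b with
  | zero => simp [substPow]
  | succ M ih =>
    show ((γ b).flatMap (substPow γ M)).flatMap d = _
    simp only [List.flatMap_assoc, ih]
    rw [← List.flatMap_assoc, h, List.flatMap_assoc, Nat.mul_succ]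
    simp only [← substPow_add]

end Substitutions

section Recognizability

variable {A B : Type} {d : B → List A} {ℓ : ℕ}

lemma prefix_of_flatMap_eq_append (hd : Injective d) (hlen : ∀ b, (d b).length = ℓ)
    (hℓ : 0 < ℓ) : ∀ {U W : List B} {T : List A}, W.flatMap d = U.flatMap d ++ T → U <+: W
  | [], _, _, _ => List.nil_prefix
  | u :: U, [], T, h => by
    have := congrArg List.length h
    simp only [List.flatMap_nil, List.flatMap_cons, List.length_nil, List.length_append,
      hlen] at this
    omega
  | u :: U, w :: W, T, h => by
    rw [List.flatMap_cons, List.flatMap_cons, List.append_assoc] at h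
    obtain ⟨hwu, hrest⟩ := List.append_inj h (by rw [hlen, hlen])
    rw [hd hwu, List.prefix_cons_inj]
    exact prefix_of_flatMap_eq_append hd hlen hℓ hrest

lemma infix_of_flatMap_eq_append (hd : Injective d) (hlen : ∀ b, (d b).length = ℓ)
    (hℓ : 0 < ℓ) {U W : List B} {L T : List A} (h : W.flatMap d = L ++ U.flatMap d ++ T)
    (hL : ℓ ∣ L.length) : U <:+: W := by
  obtain ⟨j, hj⟩ := hL
  have hjW : j ≤ W.length := by
    have := congrArg List.length h
    simp only [List.length_append, length_flatMap_of_length_eq hlen, hj] at this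
    exact Nat.le_of_mul_le_mul_left (by omega) hℓ
  rw [← List.take_append_drop j W, List.flatMap_append, List.append_assoc] at h
  obtain ⟨-, hdrop⟩ := List.append_inj h
    (by rw [length_flatMap_of_length_eq hlen, List.length_take, min_eq_left hjW, hj])
  exact (prefix_of_flatMap_eq_append hd hlen hℓ hdrop).isInfix.trans (List.drop_suffix j W).isInfix

end Recognizability

section BlockCodes

variable {A B : Type} {ℓ : ℕ}

def blockEncode (ℓ : ℕ) (e : (Fin ℓ → A) → B) (x : ℤ → A) : ℤ → B :=
  fun n => e fun m => x (ℓ * n + m)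

-- `a₀` is only the default of `getD`: it is never read when every `d b` has length `ℓ`.
def blockDecode (ℓ : ℕ) (d : B → List A) (a₀ : A) (y : ℤ → B) : ℤ → A :=
  fun m => (d (y (m / ℓ))).getD (m % ℓ).toNat a₀

lemma mul_add_ediv_of_lt {i : ℤ} {u : ℕ} (hu : u < ℓ) : (ℓ * i + u) / ℓ = i := by
  rw [add_comm, Int.add_mul_ediv_left _ _ (by omega), Int.ediv_eq_zero_of_lt (by omega) (by omega),
    zero_add]

lemma toNat_mul_add_emod_of_lt {i : ℤ} {u : ℕ} (hu : u < ℓ) : ((ℓ * i + u) % ℓ).toNat = u := by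
  rw [add_comm, Int.add_mul_emod_self_left, Int.emod_eq_of_lt (by omega) (by omega)]
  rfl

lemma blockEncode_shiftMap_iterate (e : (Fin ℓ → A) → B) (x : ℤ → A) :
    blockEncode ℓ e (shiftMap^[ℓ] x) = shiftMap (blockEncode ℓ e x) := by
  funext n
  simp only [blockEncode, shiftMap, shiftMap_iterate_apply]
  congr 2
  funext m
  ring_nf

lemma seqWord_blockDecode_block {d : B → List A} (hd : ∀ b, (d b).length = ℓ) (a₀ : A)
    (y : ℤ → B) (i : ℤ) : seqWord (blockDecode ℓ d a₀ y) (ℓ * i) ℓ = d (y i) := by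
  apply List.ext_getElem (by simp [seqWord, hd])
  intro u hu _
  simp only [seqWord, List.length_ofFn] at hu
  simp only [seqWord, List.getElem_ofFn, blockDecode, mul_add_ediv_of_lt hu,
    toNat_mul_add_emod_of_lt hu]
  exact List.getD_eq_getElem _ _ _

lemma seqWord_blockDecode {d : B → List A} (hd : ∀ b, (d b).length = ℓ) (a₀ : A) (y : ℤ → B)
    (i : ℤ) (n : ℕ) :
    seqWord (blockDecode ℓ d a₀ y) (ℓ * i) (ℓ * n) = (seqWord y i n).flatMap d := by
  induction n generalizing i with
  | zero => simp [seqWord]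
  | succ n ih =>
    rw [mul_add_one, add_comm, seqWord_add, seqWord_blockDecode_block hd, add_comm n,
      seqWord_add, show ℓ * i + ((ℓ : ℕ) : ℤ) = ℓ * (i + 1) by ring, ih]
    simp [seqWord]

lemma blockDecode_blockEncode (hℓ : 0 < ℓ) {e : (Fin ℓ → A) → B} {d : B → List A} {a₀ : A}
    {x : ℤ → A} (h : ∀ n, d (e fun m : Fin ℓ => x (ℓ * n + m)) = seqWord x (ℓ * n) ℓ) :
    blockDecode ℓ d a₀ (blockEncode ℓ e x) = x := by
  funext m
  have hnonneg := Int.emod_nonneg m (by omega : (ℓ : ℤ) ≠ 0)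
  have hlt := Int.emod_lt_of_pos m (by omega : (0 : ℤ) < ℓ)
  simp only [blockDecode, blockEncode, h]
  rw [List.getD_eq_getElem _ _ (by simp only [seqWord, List.length_ofFn]; omega)]
  simp only [seqWord, List.getElem_ofFn]
  rw [Int.toNat_of_nonneg hnonneg, Int.mul_ediv_add_emod]

lemma blockEncode_blockDecode {e : (Fin ℓ → A) → B} {d : B → List A} {a₀ : A}
    (h : ∀ b, (e fun m : Fin ℓ => (d b).getD m a₀) = b) (y : ℤ → B) :
    blockEncode ℓ e (blockDecode ℓ d a₀ y) = y := by
  funext n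
  simp only [blockEncode, blockDecode]
  conv_rhs => rw [← h (y n)]
  congr 1
  funext m
  rw [mul_add_ediv_of_lt m.isLt, toNat_mul_add_emod_of_lt m.isLt]

variable [TopologicalSpace A] [TopologicalSpace B]

lemma continuous_blockEncode [DiscreteTopology A] (e : (Fin ℓ → A) → B) :
    Continuous (blockEncode ℓ e) :=
  continuous_pi fun _ =>
    continuous_of_discreteTopology.comp (continuous_pi fun _ => continuous_apply _)

lemma continuous_blockDecode [DiscreteTopology B] (d : B → List A) (a₀ : A) :
    Continuous (blockDecode ℓ d a₀) :=
  continuous_pi fun m =>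
    (continuous_of_discreteTopology (f := fun b => (d b).getD (m % ℓ).toNat a₀)).comp
      (continuous_apply (m / ℓ))

end BlockCodes

lemma topConj_of_invOn {α β : Type} [TopologicalSpace α] [TopologicalSpace β] {X : Set α}
    {Y : Set β} {S : α → α} {R : β → β} {F : α → β} {G : β → α} (hF : ContinuousOn F X)
    (hG : ContinuousOn G Y) (hFXY : MapsTo F X Y) (hGYX : MapsTo G Y X) (hinv : InvOn G F X Y)
    (hS : MapsTo S X X) (hR : MapsTo R Y Y) (hconj : ∀ x ∈ X, F (S x) = R (F x)) :
    TopConj X S Y R :=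
  ⟨hS, hR,
    { toFun := hFXY.restrict
      invFun := hGYX.restrict
      left_inv := fun x => Subtype.ext (hinv.1 x.2)
      right_inv := fun y => Subtype.ext (hinv.2 y.2)
      continuous_toFun := hF.mapsToRestrict hFXY
      continuous_invFun := hG.mapsToRestrict hGYX },
    fun x => Subtype.ext (hconj x x.2)⟩

def decode : Fin 5 → List (Fin 2) := ![[0, 1, 0], [0, 0, 1], [1, 0, 0], [0, 0, 0], [1, 0, 1]]

def encode (w : Fin 3 → Fin 2) : Fin 5 :=
  if w 0 = 0 then (if w 1 = 0 then (if w 2 = 0 then 3 else 1) else 0)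
  else (if w 2 = 0 then 2 else 4)

lemma length_theta : ∀ a, (theta a).length = 2 := by decide

lemma length_decode : ∀ c, (decode c).length = 3 := by decide

lemma decode_injective : Injective decode := by decide

lemma decode_gam : ∀ c, (gam c).flatMap decode = (decode c).flatMap (substPow theta 2) := by
  decide

lemma decode_infix_substPow_theta : ∀ c, decode c <:+: substPow theta 3 0 := by decide

lemma encode_decode : ∀ c, (encode fun m : Fin 3 => (decode c).getD m 0) = c := by decide

lemma decode_encode : ∀ w : Fin 3 → Fin 2, (w 0 = 0 ∨ w 1 = 0) → (w 1 = 0 ∨ w 2 = 0) →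
    decode (encode w) = List.ofFn w := by decide

lemma isChain_flatMap_theta :
    ∀ w : List (Fin 2), (w.flatMap theta).IsChain (fun a b => a = 0 ∨ b = 0)
  | [] => .nil
  | [c] => by fin_cases c <;> decide
  | c :: d :: w => by
    obtain ⟨e, he⟩ : ∃ e, theta d = [0, e] := by fin_cases d <;> exact ⟨_, rfl⟩
    rw [List.flatMap_cons]
    refine (by fin_cases c <;> decide : (theta c).IsChain _).append
      (isChain_flatMap_theta (d :: w)) fun _ _ b hb => Or.inr ?_
    simp_all

lemma isChain_substPow_theta (k : ℕ) (a : Fin 2) :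
    (substPow theta k a).IsChain (fun a b => a = 0 ∨ b = 0) := by
  cases k with
  | zero => exact List.isChain_singleton a
  | succ k => rw [substPow_succ_eq_flatMap]; exact isChain_flatMap_theta _

lemma eq_zero_or_eq_zero_of_mem_substShift_theta {x : ℤ → Fin 2} (hx : x ∈ substShift theta)
    (m : ℤ) : x m = 0 ∨ x (m + 1) = 0 := by
  obtain ⟨k, a, hk⟩ := hx m 2
  have := (isChain_substPow_theta k a).infix hk
  simpa [seqWord, List.isChain_pair] using this

lemma blockDecode_blockEncode_of_mem_substShift_theta {x : ℤ → Fin 2}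
    (hx : x ∈ substShift theta) : blockDecode 3 decode 0 (blockEncode 3 encode x) = x :=
  blockDecode_blockEncode (by norm_num) fun n => by
    have h0 := eq_zero_or_eq_zero_of_mem_substShift_theta hx (3 * n)
    have h1 := eq_zero_or_eq_zero_of_mem_substShift_theta hx (3 * n + 1)
    rw [add_assoc] at h1
    exact decode_encode _ (by simpa using h0) (by simpa using h1)

lemma exists_aligned_occurrence_of_length_mod_three {α : Type} {P V l t : List α}
    (h : l ++ V ++ t = P) (hP : P.length % 3 = 1) :
    ∃ L T, P ++ P ++ P = L ++ V ++ T ∧ 3 ∣ L.length := by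
  subst h
  simp only [List.length_append] at hP
  rcases (by omega : l.length % 3 = 0 ∨ l.length % 3 = 1 ∨ l.length % 3 = 2) with h | h | h
  · exact ⟨l, t ++ (l ++ V ++ t) ++ (l ++ V ++ t), by simp, by omega⟩
  · exact ⟨(l ++ V ++ t) ++ (l ++ V ++ t) ++ l, t, by simp,
      by simp only [List.length_append]; omega⟩
  · exact ⟨(l ++ V ++ t) ++ l, t ++ (l ++ V ++ t), by simp,
      by simp only [List.length_append]; omega⟩

lemma substPow_theta_infix_even (k : ℕ) (a : Fin 2) :
    substPow theta k a <:+: substPow theta (2 * (k + 1)) 0 := by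
  have hstep : substPow theta k a <:+: substPow theta (k + 1) 0 :=
    List.infix_flatMap_of_mem (by fin_cases a <;> decide : a ∈ theta 0) _
  exact hstep.trans (substPow_prefix_of_le (by rfl : theta 0 = [0, 1]) (by omega)).isInfix

lemma exists_aligned_occurrence {V : List (Fin 2)} {k : ℕ} {a : Fin 2}
    (hV : V <:+: substPow theta k a) :
    ∃ M L T, (substPow gam M 3).flatMap decode = L ++ V ++ T ∧ 3 ∣ L.length := by
  obtain ⟨l, t, hP⟩ := hV.trans (substPow_theta_infix_even k a)
  have hlen : (substPow theta (2 * (k + 1)) 0).length % 3 = 1 := by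
    rw [length_substPow length_theta, pow_mul, Nat.pow_mod]
    norm_num
  refine ⟨k + 1, ?_⟩
  rw [flatMap_substPow_of_semiconj decode_gam]
  simpa [decode] using exists_aligned_occurrence_of_length_mod_three hP hlen

lemma blockEncode_mem_substShift_gam {x : ℤ → Fin 2} (hx : x ∈ substShift theta) :
    blockEncode 3 encode x ∈ substShift gam := by
  intro i n
  obtain ⟨k, a, hV⟩ := hx (3 * i) (3 * n)
  have hdecode := seqWord_blockDecode length_decode 0 (blockEncode 3 encode x) i n
  rw [Nat.cast_ofNat, blockDecode_blockEncode_of_mem_substShift_theta hx] at hdecode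
  rw [hdecode] at hV
  obtain ⟨M, L, T, hMLT, hL⟩ := exists_aligned_occurrence hV
  exact ⟨M, 3, infix_of_flatMap_eq_append decode_injective length_decode (by norm_num) hMLT hL⟩

lemma blockDecode_mem_substShift_theta {y : ℤ → Fin 5} (hy : y ∈ substShift gam) :
    blockDecode 3 decode 0 y ∈ substShift theta := by
  intro i n
  obtain ⟨k, c, hk⟩ := hy (i / 3) (n + 1)
  refine ⟨2 * k + 3, 0, ?_⟩
  have hblock : seqWord (blockDecode 3 decode 0 y) i n
      <:+: (seqWord y (i / 3) (n + 1)).flatMap decode := by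
    rw [← seqWord_blockDecode length_decode]
    exact seqWord_infix _ (by omega) (by push_cast; omega)
  have hsubst : (substPow gam k c).flatMap decode <:+: substPow theta (2 * k + 3) 0 := by
    rw [flatMap_substPow_of_semiconj decode_gam, substPow_add]
    exact (decode_infix_substPow_theta c).flatMap _
  exact hblock.trans ((hk.flatMap decode).trans hsubst)

/-- (X_θ, σ³) is topologically conjugate to (X_γ, σ). -/
theorem statement9 :
    TopConj (substShift theta) (shiftMap^[3]) (substShift gam) shiftMap :=
  topConj_of_invOn (continuous_blockEncode encode).continuousOn
    (continuous_blockDecode decode 0).continuousOn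
    (fun _ => blockEncode_mem_substShift_gam) (fun _ => blockDecode_mem_substShift_theta)
    ⟨fun _ => blockDecode_blockEncode_of_mem_substShift_theta,
      fun y _ => blockEncode_blockDecode encode_decode y⟩
    ((mapsTo_shiftMap_substShift theta).iterate 3) (mapsTo_shiftMap_substShift gam)
    fun x _ => blockEncode_shiftMap_iterate encode x

end
end

section
/- Let X be a Cantor space (nonempty, compact, metrizable, totally disconnected, with no isolated points), let T be a minimal homeomorphism of X, let p : X → {1,2,3,...} be continuous, suppose S(x) = T^{p(x)}(x) is a homeomorphism of X with every S-orbit dense, and let c be the orbit number of the speedup. For x ∈ X and n ≥ 1 write p(x,n) = Σ_{i=0}^{n-1} p(S^i(x)), so that S^n(x) = T^{p(x,n)}(x). Then the following are equivalent: (1) there exists a finite partition of X into nonempty clopen sets, on each of which p is constant, such that p(x,n) = c·n for every x ∈ X and every n ≥ 1 for which S^n(x) lies in the same part of the partition as x; (2) there exists a continuous function g : X → ℤ such that p(x) = c + g(x) − g(S(x)) for all x ∈ X (i.e., p − c is an S-coboundary). -/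
open Set Topology Classical

noncomputable section

/-!
Direction (2) ⇒ (1): if `p = c + g - g ∘ S`, the sums telescope to `p(x,n) = c n + g x - g (Sⁿ x)`,
so on the fibres of the continuous map `x ↦ (p x, g x)`, a finite clopen partition,
returns give `p(x,n) = c n`.

Direction (1) ⇒ (2): fix a nonempty part `U`. By minimality and compactness every forward
`S`-orbit enters `U`, and the entry time `τ` is locally constant since `U` is clopen. The transfer
function `g x = p(x, τ x) - c τ x` is then continuous, and the return condition on `U`
is exactly what makes `p - c = g - g ∘ S` at the points of `U`; off `U` it holds by construction.
-/

open Function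

section Iterate

variable {X : Type}

/-- The value is `0` when the forward orbit of `x` never enters `U`. -/
def entryTime (S : X → X) (U : Set X) (x : X) : ℕ :=
  sInf {n | S^[n] x ∈ U}

variable {S : X → X}

theorem psum_succ (p : X → ℕ) (x : X) (n : ℕ) :
    psum p S x (n + 1) = p x + psum p S (S x) n := by
  simp only [psum, Finset.sum_range_succ', iterate_succ_apply, iterate_zero_apply, add_comm]

theorem psum_eq_of_coboundary {p : X → ℕ} {c : ℕ} {g : X → ℤ}
    (hpg : ∀ x, (p x : ℤ) = c + g x - g (S x)) (x : X) (n : ℕ) :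
    (psum p S x n : ℤ) = c * n + g x - g (S^[n] x) := by
  induction n generalizing x with
  | zero => simp [psum]
  | succ n ih => rw [psum_succ, iterate_succ_apply]; push_cast; rw [ih, hpg]; ring

theorem continuous_psum [TopologicalSpace X] {p : X → ℕ} (hp : Continuous p)
    (hS : Continuous S) {τ : X → ℕ} (hτ : Continuous τ) :
    Continuous fun x => psum p S x (τ x) := by
  have hpsum : Continuous fun nx : ℕ × X => psum p S nx.2 nx.1 :=
    continuous_prod_of_discrete_left.2 fun n =>
      continuous_finsetSum (Finset.range n) fun i _ => hp.comp (hS.iterate i)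
  exact hpsum.comp (hτ.prodMk continuous_id)

variable {U : Set X} {x : X}

theorem iterate_entryTime_mem (h : ∃ n, S^[n] x ∈ U) : S^[entryTime S U x] x ∈ U :=
  Nat.sInf_mem h

theorem iterate_notMem_of_lt_entryTime {m : ℕ} (hm : m < entryTime S U x) : S^[m] x ∉ U :=
  Nat.notMem_of_lt_sInf hm

theorem entryTime_eq_zero (hx : x ∈ U) : entryTime S U x = 0 :=
  Nat.sInf_eq_zero.2 (Or.inl hx)

theorem entryTime_eq_iff (h : ∃ n, S^[n] x ∈ U) {n : ℕ} :
    entryTime S U x = n ↔ S^[n] x ∈ U ∧ ∀ m < n, S^[m] x ∉ U := by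
  refine ⟨fun hn => hn ▸ ⟨iterate_entryTime_mem h, fun m => iterate_notMem_of_lt_entryTime⟩,
    fun ⟨hn, hlt⟩ => le_antisymm (Nat.sInf_le hn) ?_⟩
  exact not_lt.1 fun hlt' => hlt _ hlt' (iterate_entryTime_mem h)

theorem entryTime_eq_succ (hx : x ∉ U) (h : ∃ n, S^[n] x ∈ U) :
    entryTime S U x = entryTime S U (S x) + 1 := by
  obtain ⟨n, hn⟩ := h
  have hn0 : n ≠ 0 := by rintro rfl; exact hx hn
  obtain ⟨k, rfl⟩ := Nat.exists_eq_succ_of_ne_zero hn0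
  have hSx : ∃ n, S^[n] (S x) ∈ U := ⟨k, by rwa [← iterate_succ_apply]⟩
  refine (entryTime_eq_iff ⟨_, hn⟩).2 ⟨by rw [iterate_succ_apply]; exact iterate_entryTime_mem hSx,
    fun m hm => ?_⟩
  cases m with
  | zero => exact hx
  | succ m => rw [iterate_succ_apply]; exact iterate_notMem_of_lt_entryTime (by omega)

theorem continuous_entryTime [TopologicalSpace X] (hS : Continuous S) (hU : IsClopen U)
    (h : ∀ x, ∃ n, S^[n] x ∈ U) : Continuous (entryTime S U) := by
  refine continuous_discrete_rng.2 fun n => ?_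
  have hfib : entryTime S U ⁻¹' {n} = S^[n] ⁻¹' U ∩ ⋂ m ∈ Finset.range n, S^[m] ⁻¹' Uᶜ := by
    ext y
    simp [entryTime_eq_iff (h y)]
  rw [hfib]
  exact (hU.isOpen.preimage (hS.iterate n)).inter
    (isOpen_biInter_finset fun m _ => hU.isClosed.isOpen_compl.preimage (hS.iterate m))

end Iterate

theorem IsHomeomorph.iterate {X : Type} [TopologicalSpace X] {S : X → X} (hS : IsHomeomorph S) :
    ∀ n, IsHomeomorph S^[n]
  | 0 => IsHomeomorph.id
  | n + 1 => (hS.iterate n).comp hS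

section Minimal

variable {X : Type} [TopologicalSpace X] [CompactSpace X] {S : X → X}

/-- A point of `⋂ₙ Sⁿ K` has its whole orbit, backward part included, inside `K`. -/
theorem exists_orbitIn_subset_of_mapsTo (hS : IsHomeomorph S) {K : Set X}
    (hK : IsClosed K) (hKne : K.Nonempty) (hSK : MapsTo S K K) :
    ∃ w ∈ K, orbitIn S univ w ⊆ K := by
  obtain ⟨w, hw⟩ := IsCompact.nonempty_iInter_of_sequence_nonempty_isCompact_isClosed
    (fun n => S^[n] '' K)
    (fun n => by
      rw [iterate_succ, image_comp]
      exact image_mono (hSK.image_subset))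
    (fun n => hKne.image _) (by simpa using hK.isCompact)
    (fun n => (hS.iterate n).isClosedMap K hK)
  have hwK : ∀ n, w ∈ S^[n] '' K := mem_iInter.1 hw
  have hw0 : w ∈ K := by simpa using hwK 0
  refine ⟨w, hw0, ?_⟩
  rintro y ⟨-, n, rfl | hyw⟩
  · exact hSK.iterate n hw0
  · obtain ⟨u, hu, huw⟩ := hwK n
    rwa [← (hS.injective.iterate n) (huw.trans hyw.symm)]

theorem MinimalOn.exists_iterate_mem (hmin : MinimalOn S univ) (hS : IsHomeomorph S)
    {U : Set X} (hU : IsOpen U) (hUne : U.Nonempty) (x : X) :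
    ∃ n, S^[n] x ∈ U := by
  by_contra! hx
  let K := ⋂ n : ℕ, S^[n] ⁻¹' Uᶜ
  have hK : IsClosed K :=
    isClosed_iInter fun n => hU.isClosed_compl.preimage (hS.continuous.iterate n)
  have hSK : MapsTo S K K := fun y hy => mem_iInter.2 fun n => by
    rw [mem_preimage, ← iterate_succ_apply]
    exact mem_iInter.1 hy (n + 1)
  obtain ⟨w, -, hwK⟩ := exists_orbitIn_subset_of_mapsTo hS hK ⟨x, mem_iInter.2 hx⟩ hSK
  obtain ⟨u, hu⟩ := hUne
  have huK : u ∈ K := hK.closure_subset_iff.2 hwK (hmin w (mem_univ w) (mem_univ u))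
  exact mem_iInter.1 huK 0 hu

theorem exists_coboundary_of_psum_eq_on_returns (hmin : MinimalOn S univ) (hS : IsHomeomorph S)
    {p : X → ℕ} (hp : Continuous p) {c : ℕ} {U : Set X} (hU : IsClopen U) (hUne : U.Nonempty)
    (hret : ∀ x n, 1 ≤ n → x ∈ U → S^[n] x ∈ U → psum p S x n = c * n) :
    ∃ g : X → ℤ, Continuous g ∧ ∀ x, (p x : ℤ) = c + g x - g (S x) := by
  have hit := hmin.exists_iterate_mem hS hU.isOpen hUne
  have hτ := continuous_entryTime hS.continuous hU hit
  refine ⟨fun x => psum p S x (entryTime S U x) - c * entryTime S U x,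
    (continuous_of_discreteTopology.comp (continuous_psum hp hS.continuous hτ)).sub
      ((continuous_of_discreteTopology (f := fun k : ℕ => (c * k : ℤ))).comp hτ), fun x => ?_⟩
  by_cases hx : x ∈ U
  · have hreturn := hret x (entryTime S U (S x) + 1) (Nat.le_add_left 1 _) hx
      (by rw [iterate_succ_apply]; exact iterate_entryTime_mem (hit (S x)))
    rw [psum_succ] at hreturn
    zify at hreturn
    beta_reduce
    rw [entryTime_eq_zero hx, show psum p S x 0 = 0 from rfl]
    push_cast
    linear_combination hreturn
  · simp only [entryTime_eq_succ hx (hit x), psum_succ]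
    push_cast
    ring

end Minimal

theorem exists_clopen_partition_of_continuous {X D : Type} [TopologicalSpace X]
    [CompactSpace X] [TopologicalSpace D] [DiscreteTopology D] {F : X → D} (hF : Continuous F) :
    ∃ (ι : Type) (_ : Fintype ι) (Q : ι → Set X),
      (∀ i, IsClopen (Q i) ∧ (Q i).Nonempty) ∧ Pairwise (Disjoint on Q) ∧
      (⋃ i, Q i) = univ ∧ ∀ i, ∀ x ∈ Q i, ∀ y ∈ Q i, F x = F y := by
  refine ⟨range F, (isCompact_range hF).finite_of_discrete.fintype, fun v => F ⁻¹' {v.1},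
    ?_, ?_, ?_, ?_⟩
  · rintro ⟨_, x, rfl⟩
    exact ⟨(isClopen_discrete _).preimage hF, x, rfl⟩
  · intro v w hvw
    exact Disjoint.preimage F (disjoint_singleton.2 fun h => hvw (Subtype.ext h))
  · exact eq_univ_of_forall fun x => mem_iUnion.2 ⟨⟨F x, x, rfl⟩, rfl⟩
  · intro v x hx y hy
    exact hx.trans hy.symm

theorem statement10_general {X : Type} [TopologicalSpace X] [CompactSpace X]
    [Nonempty X]
    (p : X → ℕ) (hpcont : Continuous p)
    (S : X → X)
    (hSh : IsHomeomorph S) (hSmin : MinimalOn S Set.univ)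
    (c : ℕ) :
    ((∃ (ι : Type) (_ : Fintype ι) (Q : ι → Set X),
        (∀ i, IsClopen (Q i) ∧ (Q i).Nonempty) ∧
        Pairwise (Function.onFun Disjoint Q) ∧
        (⋃ i, Q i) = Set.univ ∧
        (∀ i, ∀ x ∈ Q i, ∀ y ∈ Q i, p x = p y) ∧
        (∀ x : X, ∀ n : ℕ, 1 ≤ n → (∃ i, x ∈ Q i ∧ S^[n] x ∈ Q i) →
          psum p S x n = c * n)) ↔
      (∃ g : X → ℤ, Continuous g ∧ ∀ x, (p x : ℤ) = c + g x - g (S x))) := by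
  constructor
  · rintro ⟨ι, _, Q, hQ, -, hcov, -, hret⟩
    obtain ⟨x⟩ := ‹Nonempty X›
    obtain ⟨i, -⟩ := mem_iUnion.1 (hcov ▸ mem_univ x)
    exact exists_coboundary_of_psum_eq_on_returns hSmin hSh hpcont
      (hQ i).1 (hQ i).2 fun x n hn hx hxn => hret x n hn ⟨i, hx, hxn⟩
  · rintro ⟨g, hg, hpg⟩
    obtain ⟨ι, _, Q, hQ, hdisj, hcov, hfib⟩ :=
      exists_clopen_partition_of_continuous (hpcont.prodMk hg)
    refine ⟨ι, inferInstance, Q, hQ, hdisj, hcov,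
      fun i x hx y hy => congrArg Prod.fst (hfib i x hx y hy), ?_⟩
    rintro x n - ⟨i, hx, hxn⟩
    have hgx : g x = g (S^[n] x) := congrArg Prod.snd (hfib i x hx _ hxn)
    have htel := psum_eq_of_coboundary hpg x n
    rw [← hgx, add_sub_cancel_right] at htel
    exact_mod_cast htel

/-- for a minimal bounded speedup of a minimal Cantor system, p(x,n) = c·n
along returns to the parts of some clopen partition on which p is constant, iff p - c
is an S-coboundary. -/
theorem statement10 {X : Type} [TopologicalSpace X] [CompactSpace X] [TopologicalSpace.MetrizableSpace X]
    [TotallyDisconnectedSpace X] [Nonempty X]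
    (hni : ∀ x : X, ¬ IsOpen ({x} : Set X))
    (T : X → X) (hT : IsHomeomorph T) (hTmin : MinimalOn T Set.univ)
    (p : X → ℕ) (hpcont : Continuous p) (hppos : ∀ x, 1 ≤ p x)
    (S : X → X) (hSdef : S = fun x => T^[p x] x)
    (hSh : IsHomeomorph S) (hSmin : MinimalOn S Set.univ)
    (c : ℕ) (hc : OrbitNumberOn T S Set.univ c) :
    ((∃ (ι : Type) (_ : Fintype ι) (Q : ι → Set X),
        (∀ i, IsClopen (Q i) ∧ (Q i).Nonempty) ∧
        Pairwise (Function.onFun Disjoint Q) ∧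
        (⋃ i, Q i) = Set.univ ∧
        (∀ i, ∀ x ∈ Q i, ∀ y ∈ Q i, p x = p y) ∧
        (∀ x : X, ∀ n : ℕ, 1 ≤ n → (∃ i, x ∈ Q i ∧ S^[n] x ∈ Q i) →
          psum p S x n = c * n)) ↔
      (∃ g : X → ℤ, Continuous g ∧ ∀ x, (p x : ℤ) = c + g x - g (S x))) :=
  statement10_general p hpcont S hSh hSmin c
end
end
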